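/- arXiv:2403.00407 — 8 statements merged into one kernel-verified Lean document; each statement's English description precedes it below -/
import Mathlib

section
/- Suppose that A,B,C,D are not coplanar. If (X₁,Y) and (X₂,Y) are two solutions of System (*) with the same second component Y, then X₁ = X₂; that is, every solution (X,Y) of System (*) is uniquely determined by its component Y. -/
/-! Two solutions with the same `Y` satisfy `‖X₁ - T‖ = ‖X₂ - T‖` for every `T`, so if `X₁ ≠ X₂`
the points `A, B, C, D` lie on the perpendicular bisector plane of `X₁ X₂`. -/

noncomputable section

/-- The Euclidean space ℝ³. -/
abbrev E3 := EuclideanSpace ℝ (Fin 3)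

/-- `kc Xs Ys T` is the constant `k_T = 1/‖X*−T‖² + 1/‖Y*−T‖²`. -/
def kc (Xs Ys T : E3) : ℝ := 1 / ‖Xs - T‖ ^ 2 + 1 / ‖Ys - T‖ ^ 2

/-- `(X, Y)` is a solution of System (*). -/
def IsSol (A B C D E F Xs Ys X Y : E3) : Prop :=
  ∀ T ∈ ({A, B, C, D, E, F} : Set E3),
    X ≠ T ∧ Y ≠ T ∧ 1 / ‖X - T‖ ^ 2 + 1 / ‖Y - T‖ ^ 2 = kc Xs Ys T

/-- Condition (i): no four of the six points `A,B,C,D,E,F` are coplanar. -/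
def CondI (A B C D E F : E3) : Prop :=
  ∀ T₁ T₂ T₃ T₄ : E3,
    T₁ ∈ ({A, B, C, D, E, F} : Set E3) → T₂ ∈ ({A, B, C, D, E, F} : Set E3) →
    T₃ ∈ ({A, B, C, D, E, F} : Set E3) → T₄ ∈ ({A, B, C, D, E, F} : Set E3) →
    T₁ ≠ T₂ → T₁ ≠ T₃ → T₁ ≠ T₄ → T₂ ≠ T₃ → T₂ ≠ T₄ → T₃ ≠ T₄ →
    ¬ Coplanar ℝ ({T₁, T₂, T₃, T₄} : Set E3)

/-- Condition (ii): no four of the six spheres of center `T` and radius `1/√k_T`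
share a common point of ℝ³. -/
def CondII (A B C D E F Xs Ys : E3) : Prop :=
  ∀ T₁ T₂ T₃ T₄ : E3,
    T₁ ∈ ({A, B, C, D, E, F} : Set E3) → T₂ ∈ ({A, B, C, D, E, F} : Set E3) →
    T₃ ∈ ({A, B, C, D, E, F} : Set E3) → T₄ ∈ ({A, B, C, D, E, F} : Set E3) →
    T₁ ≠ T₂ → T₁ ≠ T₃ → T₁ ≠ T₄ → T₂ ≠ T₃ → T₂ ≠ T₄ → T₃ ≠ T₄ →
    ¬ ∃ P : E3,
        ‖P - T₁‖ ^ 2 = 1 / kc Xs Ys T₁ ∧ ‖P - T₂‖ ^ 2 = 1 / kc Xs Ys T₂ ∧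
        ‖P - T₃‖ ^ 2 = 1 / kc Xs Ys T₃ ∧ ‖P - T₄‖ ^ 2 = 1 / kc Xs Ys T₄

/-- `Γ_T(Y) = ‖Y−T‖²/(k_T‖Y−T‖² − 1) − ‖T‖²`. -/
def Gamma (Xs Ys T Y : E3) : ℝ :=
  ‖Y - T‖ ^ 2 / (kc Xs Ys T * ‖Y - T‖ ^ 2 - 1) - ‖T‖ ^ 2

open Module

theorem coplanar_perpBisector {V P : Type*} [NormedAddCommGroup V] [InnerProductSpace ℝ V]
    [MetricSpace P] [NormedAddTorsor V P] (hV : finrank ℝ V = 3) {p₁ p₂ : P} (h : p₁ ≠ p₂) :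
    Coplanar ℝ (AffineSubspace.perpBisector p₁ p₂ : Set P) := by
  have : Fact (finrank ℝ V = 2 + 1) := ⟨hV⟩
  have : FiniteDimensional ℝ V := Module.finite_of_finrank_eq_succ hV
  rw [Coplanar, ← AffineSubspace.direction, AffineSubspace.direction_perpBisector,
    ← finrank_eq_rank,
    Submodule.finrank_orthogonal_span_singleton (n := 2) (vsub_ne_zero.2 h.symm)]
  norm_num

theorem norm_eq_of_one_div_sq_eq {G : Type*} [SeminormedAddGroup G] {x y : G}
    (h : 1 / ‖x‖ ^ 2 = 1 / ‖y‖ ^ 2) : ‖x‖ = ‖y‖ := by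
  rwa [one_div, one_div, inv_inj, pow_left_inj₀ (norm_nonneg x) (norm_nonneg y) two_ne_zero] at h

theorem IsSol.mem_perpBisector {A B C D E F Xs Ys X₁ X₂ Y T : E3}
    (h₁ : IsSol A B C D E F Xs Ys X₁ Y) (h₂ : IsSol A B C D E F Xs Ys X₂ Y)
    (hT : T ∈ ({A, B, C, D, E, F} : Set E3)) : T ∈ AffineSubspace.perpBisector X₁ X₂ := by
  obtain ⟨-, -, e₁⟩ := h₁ T hT
  obtain ⟨-, -, e₂⟩ := h₂ T hT
  rw [AffineSubspace.mem_perpBisector_iff_dist_eq, dist_comm, dist_eq_norm, dist_comm T,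
    dist_eq_norm]
  exact norm_eq_of_one_div_sq_eq (by linarith)

theorem solution_determined_by_Y_general (A B C D E F Xs Ys : E3)
    (hnc : ¬ Coplanar ℝ ({A, B, C, D} : Set E3))
    (X₁ X₂ Y : E3)
    (h₁ : IsSol A B C D E F Xs Ys X₁ Y) (h₂ : IsSol A B C D E F Xs Ys X₂ Y) :
    X₁ = X₂ := by
  by_contra hne
  refine hnc ((coplanar_perpBisector finrank_euclideanSpace_fin hne).subset fun T hT ↦ ?_)
  refine h₁.mem_perpBisector h₂ ?_
  simp only [Set.mem_insert_iff, Set.mem_singleton_iff] at hT ⊢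
  tauto

/-- If A,B,C,D are not coplanar, every solution (X,Y) of System (*) is uniquely
determined by its second component Y. -/
theorem solution_determined_by_Y (A B C D E F Xs Ys : E3)
    (hdist : List.Pairwise (· ≠ ·) [A, B, C, D, E, F, Xs, Ys])
    (hnc : ¬ Coplanar ℝ ({A, B, C, D} : Set E3))
    (X₁ X₂ Y : E3)
    (h₁ : IsSol A B C D E F Xs Ys X₁ Y) (h₂ : IsSol A B C D E F Xs Ys X₂ Y) :
    X₁ = X₂ :=
  solution_determined_by_Y_general A B C D E F Xs Ys hnc X₁ X₂ Y h₁ h₂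
end
end

section
/- Suppose A,B,C,D are not coplanar, and write A=(a₁,a₂,a₃), B=(b₁,b₂,b₃), C=(c₁,c₂,c₃), D=(d₁,d₂,d₃). Let Δ be the determinant of the 3×3 matrix with rows (a₁−b₁, a₂−b₂, a₃−b₃), (a₁−c₁, a₂−c₂, a₃−c₃), (a₁−d₁, a₂−d₂, a₃−d₃); then Δ ≠ 0. If (X,Y) is a solution of System (*) with X = (x₁,x₂,x₃), then k_T‖Y−T‖² > 1 for every T (so that Γ_T(Y) is defined) and: x₁ = (1/(2Δ))·det[[Γ_B(Y)−Γ_A(Y), a₂−b₂, a₃−b₃],[Γ_C(Y)−Γ_A(Y), a₂−c₂, a₃−c₃],[Γ_D(Y)−Γ_A(Y), a₂−d₂, a₃−d₃]], x₂ = (1/(2Δ))·det[[a₁−b₁, Γ_B(Y)−Γ_A(Y), a₃−b₃],[a₁−c₁, Γ_C(Y)−Γ_A(Y), a₃−c₃],[a₁−d₁, Γ_D(Y)−Γ_A(Y), a₃−d₃]], and x₃ = (1/(2Δ))·det[[a₁−b₁, a₂−b₂, Γ_B(Y)−Γ_A(Y)],[a₁−c₁, a₂−c₂, Γ_C(Y)−Γ_A(Y)],[a₁−d₁,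 a₂−d₂, Γ_D(Y)−Γ_A(Y)]]. -/
noncomputable section

/-! At a solution, `1/‖X-T‖² = k_T - 1/‖Y-T‖²`, so `‖X-T‖² = ‖Y-T‖²/(k_T‖Y-T‖² - 1)`
and `Γ_T(Y) = ‖X-T‖² - ‖T‖² = ‖X‖² - 2⟪T, X⟫`. Subtracting the equation for `A` eliminates
`‖X‖²` and leaves the linear system `⟪A - T, 2X⟫ = Γ_T(Y) - Γ_A(Y)` for `T = B, C, D`. Its
matrix has rows `A - B, A - C, A - D`, which are linearly independent because `A, B, C, D`
are not coplanar; hence `Δ ≠ 0` and Cramer's rule gives the coordinates of `X`. -/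

open Matrix

theorem Matrix.apply_eq_det_updateCol_div_det {K n : Type*} [Field K] [Fintype n] [DecidableEq n]
    {M : Matrix n n K} (hM : M.det ≠ 0) {x b : n → K} (h : M *ᵥ x = b) (i : n) :
    x i = (M.updateCol i b).det / M.det := by
  have hcramer : M.det • x = M.cramer b := by
    rw [← h, cramer_eq_adjugate_mulVec, mulVec_mulVec, adjugate_mul, smul_mulVec, one_mulVec]
  rw [← cramer_apply, ← hcramer, Pi.smul_apply, smul_eq_mul, mul_div_cancel_left₀ _ hM]

theorem LinearIndependent.det_of_ofLp_ne_zero {K n : Type*} [RCLike K] [Fintype n]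
    [DecidableEq n] {v : n → EuclideanSpace K n} (hv : LinearIndependent K v) :
    (Matrix.of fun i => (v i).ofLp).det ≠ 0 := by
  rw [← isUnit_iff_ne_zero, ← isUnit_iff_isUnit_det, ← linearIndependent_rows_iff_isUnit]
  exact hv.map' (WithLp.linearEquiv 2 K (n → K)).toLinearMap (LinearEquiv.ker _)

theorem Matrix.of_ofLp_mulVec {n ι : Type*} [Fintype n] (v : ι → EuclideanSpace ℝ n)
    (x : EuclideanSpace ℝ n) :
    (Matrix.of fun i => (v i).ofLp) *ᵥ x.ofLp = fun i => inner ℝ (v i) x := by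
  ext i
  simp [Matrix.mulVec, dotProduct, PiLp.inner_apply, mul_comm]

open Submodule in
theorem linearIndependent_vsub_of_not_coplanar {k V P : Type*} [Field k] [AddCommGroup V]
    [Module k V] [AddTorsor V P] {a b c d : P} (h : ¬ Coplanar k ({a, b, c, d} : Set P)) :
    LinearIndependent k ![a -ᵥ b, a -ᵥ c, a -ᵥ d] := by
  have hspan :
      vectorSpan k ({a, b, c, d} : Set P) = span k (Set.range ![a -ᵥ b, a -ᵥ c, a -ᵥ d]) := by
    rw [vectorSpan_eq_span_vsub_set_left k (Set.mem_insert a _), Set.image_insert_eq,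
      vsub_self, span_insert_zero]
    simp only [Set.image_insert_eq, Set.image_singleton, Matrix.range_cons, Set.range_unique,
      Set.singleton_union]
    rfl
  rw [coplanar_iff_finrank_le_two, hspan] at h
  rw [linearIndependent_iff_card_eq_finrank_span]
  have := finrank_range_le_card (R := k) ![a -ᵥ b, a -ᵥ c, a -ᵥ d]
  simp only [Fintype.card_fin, Set.finrank] at this ⊢
  omega

section System

variable {Xs Ys T X Y : E3}

theorem kc_mul_sub_one_eq (hY : Y ≠ T)
    (h : 1 / ‖X - T‖ ^ 2 + 1 / ‖Y - T‖ ^ 2 = kc Xs Ys T) :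
    kc Xs Ys T * ‖Y - T‖ ^ 2 - 1 = ‖Y - T‖ ^ 2 / ‖X - T‖ ^ 2 := by
  have hY' : ‖Y - T‖ ≠ 0 := norm_ne_zero_iff.2 (sub_ne_zero.2 hY)
  rw [← h]
  field_simp
  ring

theorem one_lt_kc_mul (hX : X ≠ T) (hY : Y ≠ T)
    (h : 1 / ‖X - T‖ ^ 2 + 1 / ‖Y - T‖ ^ 2 = kc Xs Ys T) :
    1 < kc Xs Ys T * ‖Y - T‖ ^ 2 := by
  have hX' : ‖X - T‖ ≠ 0 := norm_ne_zero_iff.2 (sub_ne_zero.2 hX)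
  have hY' : ‖Y - T‖ ≠ 0 := norm_ne_zero_iff.2 (sub_ne_zero.2 hY)
  have : 0 < ‖Y - T‖ ^ 2 / ‖X - T‖ ^ 2 := by positivity
  linarith [kc_mul_sub_one_eq hY h]

theorem Gamma_eq_norm_sq_sub_inner (hY : Y ≠ T)
    (h : 1 / ‖X - T‖ ^ 2 + 1 / ‖Y - T‖ ^ 2 = kc Xs Ys T) :
    Gamma Xs Ys T Y = ‖X‖ ^ 2 - 2 * inner ℝ T X := by
  have hY' : ‖Y - T‖ ≠ 0 := norm_ne_zero_iff.2 (sub_ne_zero.2 hY)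
  rw [Gamma, kc_mul_sub_one_eq hY h, div_div_cancel₀ (by positivity), norm_sub_sq_real,
    real_inner_comm]
  ring

end System

theorem cramer_formula_for_X_general (A B C D E F Xs Ys : E3)
    (hnc : ¬ Coplanar ℝ ({A, B, C, D} : Set E3))
    (Δ : ℝ)
    (hΔ : Δ = Matrix.det !![A 0 - B 0, A 1 - B 1, A 2 - B 2;
                            A 0 - C 0, A 1 - C 1, A 2 - C 2;
                            A 0 - D 0, A 1 - D 1, A 2 - D 2]) :
    Δ ≠ 0 ∧
    ∀ X Y : E3, IsSol A B C D E F Xs Ys X Y →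
      (∀ T ∈ ({A, B, C, D, E, F} : Set E3), kc Xs Ys T * ‖Y - T‖ ^ 2 > 1) ∧
      X 0 = (1 / (2 * Δ)) * Matrix.det
        !![Gamma Xs Ys B Y - Gamma Xs Ys A Y, A 1 - B 1, A 2 - B 2;
           Gamma Xs Ys C Y - Gamma Xs Ys A Y, A 1 - C 1, A 2 - C 2;
           Gamma Xs Ys D Y - Gamma Xs Ys A Y, A 1 - D 1, A 2 - D 2] ∧
      X 1 = (1 / (2 * Δ)) * Matrix.det
        !![A 0 - B 0, Gamma Xs Ys B Y - Gamma Xs Ys A Y, A 2 - B 2;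
           A 0 - C 0, Gamma Xs Ys C Y - Gamma Xs Ys A Y, A 2 - C 2;
           A 0 - D 0, Gamma Xs Ys D Y - Gamma Xs Ys A Y, A 2 - D 2] ∧
      X 2 = (1 / (2 * Δ)) * Matrix.det
        !![A 0 - B 0, A 1 - B 1, Gamma Xs Ys B Y - Gamma Xs Ys A Y;
           A 0 - C 0, A 1 - C 1, Gamma Xs Ys C Y - Gamma Xs Ys A Y;
           A 0 - D 0, A 1 - D 1, Gamma Xs Ys D Y - Gamma Xs Ys A Y] := by
  set M : Matrix (Fin 3) (Fin 3) ℝ := Matrix.of fun i => (![A - B, A - C, A - D] i).ofLp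
  have hMΔ : M.det = Δ := by
    rw [hΔ]; congr 1; ext i j; fin_cases i <;> fin_cases j <;> rfl
  have hM0 : M.det ≠ 0 := by
    have hli := linearIndependent_vsub_of_not_coplanar hnc
    simp only [vsub_eq_sub] at hli
    exact hli.det_of_ofLp_ne_zero
  refine ⟨hMΔ ▸ hM0, fun X Y hsol => ⟨fun T hT => ?_, ?_⟩⟩
  · obtain ⟨hXT, hYT, hT⟩ := hsol T hT
    exact one_lt_kc_mul hXT hYT hT
  have hΓ : ∀ T ∈ ({A, B, C, D, E, F} : Set E3),
      Gamma Xs Ys T Y - Gamma Xs Ys A Y = inner ℝ (A - T) ((2 : ℝ) • X) := by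
    intro T hT
    obtain ⟨-, hYT, hT⟩ := hsol T hT
    obtain ⟨-, hYA, hA⟩ := hsol A (by simp)
    rw [Gamma_eq_norm_sq_sub_inner hYT hT, Gamma_eq_norm_sq_sub_inner hYA hA, inner_smul_right,
      inner_sub_left]
    ring
  set g := ![Gamma Xs Ys B Y - Gamma Xs Ys A Y, Gamma Xs Ys C Y - Gamma Xs Ys A Y,
    Gamma Xs Ys D Y - Gamma Xs Ys A Y]
  have hsys : M *ᵥ ((2 : ℝ) • X).ofLp = g := by
    rw [of_ofLp_mulVec]
    ext i
    fin_cases i <;> exact (hΓ _ (by simp)).symm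
  have hX : ∀ j, X j = 1 / (2 * Δ) * (M.updateCol j g).det := by
    intro j
    have hcramer := apply_eq_det_updateCol_div_det hM0 hsys j
    rw [hMΔ, WithLp.ofLp_smul, Pi.smul_apply, smul_eq_mul] at hcramer
    rw [one_div_mul_eq_div, mul_comm 2 Δ, ← div_div, ← hcramer]
    ring
  refine ⟨?_, ?_, ?_⟩ <;> rw [hX] <;> congr 2 <;>
    ext i j <;> fin_cases i <;> fin_cases j <;> rfl

/-- If A,B,C,D are not coplanar, the determinant Δ is nonzero and, at any solution
(X,Y) of System (*), the coordinates of X are given by Cramer-type formulas in the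
quantities Γ_T(Y). -/
theorem cramer_formula_for_X (A B C D E F Xs Ys : E3)
    (hdist : List.Pairwise (· ≠ ·) [A, B, C, D, E, F, Xs, Ys])
    (hnc : ¬ Coplanar ℝ ({A, B, C, D} : Set E3))
    (Δ : ℝ)
    (hΔ : Δ = Matrix.det !![A 0 - B 0, A 1 - B 1, A 2 - B 2;
                            A 0 - C 0, A 1 - C 1, A 2 - C 2;
                            A 0 - D 0, A 1 - D 1, A 2 - D 2]) :
    Δ ≠ 0 ∧
    ∀ X Y : E3, IsSol A B C D E F Xs Ys X Y →
      (∀ T ∈ ({A, B, C, D, E, F} : Set E3), kc Xs Ys T * ‖Y - T‖ ^ 2 > 1) ∧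
      X 0 = (1 / (2 * Δ)) * Matrix.det
        !![Gamma Xs Ys B Y - Gamma Xs Ys A Y, A 1 - B 1, A 2 - B 2;
           Gamma Xs Ys C Y - Gamma Xs Ys A Y, A 1 - C 1, A 2 - C 2;
           Gamma Xs Ys D Y - Gamma Xs Ys A Y, A 1 - D 1, A 2 - D 2] ∧
      X 1 = (1 / (2 * Δ)) * Matrix.det
        !![A 0 - B 0, Gamma Xs Ys B Y - Gamma Xs Ys A Y, A 2 - B 2;
           A 0 - C 0, Gamma Xs Ys C Y - Gamma Xs Ys A Y, A 2 - C 2;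
           A 0 - D 0, Gamma Xs Ys D Y - Gamma Xs Ys A Y, A 2 - D 2] ∧
      X 2 = (1 / (2 * Δ)) * Matrix.det
        !![A 0 - B 0, A 1 - B 1, Gamma Xs Ys B Y - Gamma Xs Ys A Y;
           A 0 - C 0, A 1 - C 1, Gamma Xs Ys C Y - Gamma Xs Ys A Y;
           A 0 - D 0, A 1 - D 1, Gamma Xs Ys D Y - Gamma Xs Ys A Y] :=
  cramer_formula_for_X_general A B C D E F Xs Ys hnc Δ hΔ
end
end

section
/- If (X,Y) is a solution of System (*), then for every choice of five points T₁,T₂,T₃,T₄,T₅ among the six points A,B,C,D,E,F, the determinant of the 5×5 matrix whose first row is (Γ_{T₁}(Y), Γ_{T₂}(Y), Γ_{T₃}(Y), Γ_{T₄}(Y), Γ_{T₅}(Y)), whose second, third and fourth rows are the first, second and third coordinates of T₁,…,T₅ respectively, and whose last row is (1,1,1,1,1), is equal to zero. (At any solution one has k_T‖Y−T‖² > 1 for all T, so each Γ_T(Y) is defined.) -/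
noncomputable section

/-!
From `1/‖X−T‖² + 1/‖Y−T‖² = k_T` one gets `k_T‖Y−T‖² − 1 = ‖Y−T‖²/‖X−T‖² > 0`, hence
`Γ_T(Y) = ‖X−T‖² − ‖T‖² = ‖X‖² − 2⟪X, T⟫`. So the first row of the matrix is `‖X‖²` times the
row of ones minus `2 X i` times the `i`-th coordinate row, and the determinant vanishes.
-/

open scoped RealInnerProductSpace

theorem Matrix.det_eq_zero_of_row_eq_sum {n R : Type*} [Fintype n] [DecidableEq n] [CommRing R]
    (M : Matrix n n R) (j : n) (c : n → R) (hc : c j = 0) (h : M j = ∑ k, c k • M k) :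
    M.det = 0 := by
  simpa [hc, ← h] using M.det_updateRow_sum j c

theorem inner_eq_fin_three (x y : E3) : ⟪x, y⟫ = x 0 * y 0 + x 1 * y 1 + x 2 * y 2 := by
  simp [PiLp.inner_apply, Fin.sum_univ_three, mul_comm]

theorem det_eq_zero_of_first_row_affine (x : E3) (T : Fin 5 → E3) (g : Fin 5 → ℝ)
    (hg : ∀ i, g i = ‖x‖ ^ 2 - 2 * ⟪x, T i⟫) :
    Matrix.det !![g 0, g 1, g 2, g 3, g 4;
      T 0 0, T 1 0, T 2 0, T 3 0, T 4 0;
      T 0 1, T 1 1, T 2 1, T 3 1, T 4 1;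
      T 0 2, T 1 2, T 2 2, T 3 2, T 4 2;
      1, 1, 1, 1, 1] = 0 := by
  refine Matrix.det_eq_zero_of_row_eq_sum _ 0 ![0, -2 * x 0, -2 * x 1, -2 * x 2, ‖x‖ ^ 2] rfl ?_
  ext j
  fin_cases j <;>
    simp only [hg, inner_eq_fin_three, Fin.sum_univ_five, Finset.sum_apply, Pi.smul_apply, smul_eq_mul,
      Matrix.of_apply, Matrix.cons_val', Matrix.cons_val, Matrix.cons_val_zero, Matrix.cons_val_one,
      Matrix.cons_val_fin_one, Fin.isValue, Fin.zero_eta, Fin.mk_one, Fin.reduceFinMk] <;>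
    ring

theorem kc_mul_norm_sq_sub_one {Xs Ys X Y T : E3} (hY : Y ≠ T)
    (heq : 1 / ‖X - T‖ ^ 2 + 1 / ‖Y - T‖ ^ 2 = kc Xs Ys T) :
    kc Xs Ys T * ‖Y - T‖ ^ 2 - 1 = ‖Y - T‖ ^ 2 / ‖X - T‖ ^ 2 := by
  have : ‖Y - T‖ ≠ 0 := norm_ne_zero_iff.mpr (sub_ne_zero.mpr hY)
  rw [← heq]
  field_simp
  ring

theorem one_lt_kc_mul_norm_sq {Xs Ys X Y T : E3} (hX : X ≠ T) (hY : Y ≠ T)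
    (heq : 1 / ‖X - T‖ ^ 2 + 1 / ‖Y - T‖ ^ 2 = kc Xs Ys T) :
    1 < kc Xs Ys T * ‖Y - T‖ ^ 2 := by
  have hpos : 0 < ‖Y - T‖ ^ 2 / ‖X - T‖ ^ 2 := by
    have := sub_ne_zero.mpr hX; have := sub_ne_zero.mpr hY; positivity
  linarith [kc_mul_norm_sq_sub_one hY heq]

theorem Gamma_eq_of_eq_kc {Xs Ys X Y T : E3} (hY : Y ≠ T)
    (heq : 1 / ‖X - T‖ ^ 2 + 1 / ‖Y - T‖ ^ 2 = kc Xs Ys T) :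
    Gamma Xs Ys T Y = ‖X‖ ^ 2 - 2 * ⟪X, T⟫ := by
  have hYT : ‖Y - T‖ ≠ 0 := norm_ne_zero_iff.mpr (sub_ne_zero.mpr hY)
  rw [Gamma, kc_mul_norm_sq_sub_one hY heq, div_div_cancel₀ (pow_ne_zero 2 hYT),
    norm_sub_sq_real]
  ring

theorem gamma_det_five_points_general (A B C D E F Xs Ys : E3)
    (X Y : E3) (hsol : IsSol A B C D E F Xs Ys X Y) :
    (∀ T ∈ ({A, B, C, D, E, F} : Set E3), kc Xs Ys T * ‖Y - T‖ ^ 2 > 1) ∧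
    ∀ T₁ T₂ T₃ T₄ T₅ : E3,
      T₁ ∈ ({A, B, C, D, E, F} : Set E3) → T₂ ∈ ({A, B, C, D, E, F} : Set E3) →
      T₃ ∈ ({A, B, C, D, E, F} : Set E3) → T₄ ∈ ({A, B, C, D, E, F} : Set E3) →
      T₅ ∈ ({A, B, C, D, E, F} : Set E3) →
      List.Pairwise (· ≠ ·) [T₁, T₂, T₃, T₄, T₅] →
      Matrix.det
        !![Gamma Xs Ys T₁ Y, Gamma Xs Ys T₂ Y, Gamma Xs Ys T₃ Y,
             Gamma Xs Ys T₄ Y, Gamma Xs Ys T₅ Y;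
           T₁ 0, T₂ 0, T₃ 0, T₄ 0, T₅ 0;
           T₁ 1, T₂ 1, T₃ 1, T₄ 1, T₅ 1;
           T₁ 2, T₂ 2, T₃ 2, T₄ 2, T₅ 2;
           1, 1, 1, 1, 1] = 0 := by
  have hGamma : ∀ T ∈ ({A, B, C, D, E, F} : Set E3), Gamma Xs Ys T Y = ‖X‖ ^ 2 - 2 * ⟪X, T⟫ :=
    fun T hT ↦ let ⟨_, hY, heq⟩ := hsol T hT; Gamma_eq_of_eq_kc hY heq
  refine ⟨fun T hT ↦ let ⟨hX, hY, heq⟩ := hsol T hT; one_lt_kc_mul_norm_sq hX hY heq, ?_⟩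
  intro T₁ T₂ T₃ T₄ T₅ h₁ h₂ h₃ h₄ h₅ _
  exact det_eq_zero_of_first_row_affine X ![T₁, T₂, T₃, T₄, T₅]
    ![Gamma Xs Ys T₁ Y, Gamma Xs Ys T₂ Y, Gamma Xs Ys T₃ Y, Gamma Xs Ys T₄ Y, Gamma Xs Ys T₅ Y]
    (by intro i; fin_cases i <;> exact hGamma _ ‹_›)

/-- At any solution (X,Y) of System (*), each Γ_T(Y) is defined and for every choice of
five distinct points T₁,…,T₅ among A,…,F the 5×5 determinant with first row
(Γ_{T₁}(Y),…,Γ_{T₅}(Y)), next three rows the coordinates of the Tᵢ's, and last row all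
ones, vanishes. -/
theorem gamma_det_five_points (A B C D E F Xs Ys : E3)
    (hdist : List.Pairwise (· ≠ ·) [A, B, C, D, E, F, Xs, Ys])
    (X Y : E3) (hsol : IsSol A B C D E F Xs Ys X Y) :
    (∀ T ∈ ({A, B, C, D, E, F} : Set E3), kc Xs Ys T * ‖Y - T‖ ^ 2 > 1) ∧
    ∀ T₁ T₂ T₃ T₄ T₅ : E3,
      T₁ ∈ ({A, B, C, D, E, F} : Set E3) → T₂ ∈ ({A, B, C, D, E, F} : Set E3) →
      T₃ ∈ ({A, B, C, D, E, F} : Set E3) → T₄ ∈ ({A, B, C, D, E, F} : Set E3) →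
      T₅ ∈ ({A, B, C, D, E, F} : Set E3) →
      List.Pairwise (· ≠ ·) [T₁, T₂, T₃, T₄, T₅] →
      Matrix.det
        !![Gamma Xs Ys T₁ Y, Gamma Xs Ys T₂ Y, Gamma Xs Ys T₃ Y,
             Gamma Xs Ys T₄ Y, Gamma Xs Ys T₅ Y;
           T₁ 0, T₂ 0, T₃ 0, T₄ 0, T₅ 0;
           T₁ 1, T₂ 1, T₃ 1, T₄ 1, T₅ 1;
           T₁ 2, T₂ 2, T₃ 2, T₄ 2, T₅ 2;
           1, 1, 1, 1, 1] = 0 :=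
  gamma_det_five_points_general A B C D E F Xs Ys X Y hsol
end
end

section
/- Let (X_P,Y_P) and (X_Q,Y_Q) be two solutions of System (*) with X_P ≠ X_Q. If Γ_T(Y_P) = Γ_T(Y_Q) for each T ∈ {A,B,C,D}, then the four points A,B,C,D are coplanar. -/
noncomputable section

/-! A solution equation at `T` turns `Γ_T(Y)` into `‖X − T‖² − ‖T‖²`, so equal values of `Γ_T` at
`Y_P` and `Y_Q` mean that `T` is equidistant from `X_P` and `X_Q`. Hence `A, B, C, D` all lie on the
perpendicular bisector plane of the segment `X_P X_Q`. -/

theorem coplanar_of_subset_perpBisector {V P : Type*} [NormedAddCommGroup V]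
    [InnerProductSpace ℝ V] [MetricSpace P] [NormedAddTorsor V P] (hV : Module.finrank ℝ V = 3)
    {p₁ p₂ : P} (hp : p₁ ≠ p₂) {s : Set P} (hs : s ⊆ AffineSubspace.perpBisector p₁ p₂) :
    Coplanar ℝ s := by
  have : Fact (Module.finrank ℝ V = 2 + 1) := ⟨hV⟩
  have : FiniteDimensional ℝ V := .of_fact_finrank_eq_succ 2
  have hdir : Module.finrank ℝ (AffineSubspace.perpBisector p₁ p₂).direction = 2 := by
    rw [AffineSubspace.direction_perpBisector]
    exact Submodule.finrank_orthogonal_span_singleton (vsub_ne_zero.2 hp.symm)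
  rw [coplanar_iff_finrank_le_two, ← hdir]
  exact Submodule.finrank_mono (vectorSpan_mono ℝ hs)

theorem gamma_eq_dist_sq_sub_norm_sq {Xs Ys T X Y : E3} (hY : Y ≠ T)
    (h : 1 / ‖X - T‖ ^ 2 + 1 / ‖Y - T‖ ^ 2 = kc Xs Ys T) :
    Gamma Xs Ys T Y = dist X T ^ 2 - ‖T‖ ^ 2 := by
  have hb : ‖Y - T‖ ^ 2 ≠ 0 := pow_ne_zero 2 (norm_ne_zero_iff.2 (sub_ne_zero.2 hY))
  have hden : kc Xs Ys T * ‖Y - T‖ ^ 2 - 1 = ‖Y - T‖ ^ 2 / ‖X - T‖ ^ 2 := by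
    rw [← h, add_mul, one_div_mul_cancel hb, one_div_mul_eq_div, add_sub_cancel_right]
  rw [Gamma, hden, div_div_cancel₀ hb, dist_eq_norm]

theorem IsSol.gamma_eq {A B C D E F Xs Ys X Y T : E3} (hsol : IsSol A B C D E F Xs Ys X Y)
    (hT : T ∈ ({A, B, C, D, E, F} : Set E3)) : Gamma Xs Ys T Y = dist X T ^ 2 - ‖T‖ ^ 2 :=
  gamma_eq_dist_sq_sub_norm_sq (hsol T hT).2.1 (hsol T hT).2.2

theorem equal_gammas_implies_coplanar_general (A B C D E F Xs Ys : E3)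
    (XP YP XQ YQ : E3)
    (hP : IsSol A B C D E F Xs Ys XP YP) (hQ : IsSol A B C D E F Xs Ys XQ YQ)
    (hXPQ : XP ≠ XQ)
    (hgamma : ∀ T ∈ ({A, B, C, D} : Set E3), Gamma Xs Ys T YP = Gamma Xs Ys T YQ) :
    Coplanar ℝ ({A, B, C, D} : Set E3) := by
  refine coplanar_of_subset_perpBisector finrank_euclideanSpace_fin hXPQ fun T hT => ?_
  have hT' : T ∈ ({A, B, C, D, E, F} : Set E3) := by
    rcases hT with rfl | rfl | rfl | rfl <;> simp
  have h := hgamma T hT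
  rw [hP.gamma_eq hT', hQ.gamma_eq hT', sub_left_inj, sq_eq_sq₀ dist_nonneg dist_nonneg] at h
  exact AffineSubspace.mem_perpBisector_iff_dist_eq'.2 h

/-- If (X_P,Y_P) and (X_Q,Y_Q) are solutions of System (*) with X_P ≠ X_Q and
Γ_T(Y_P) = Γ_T(Y_Q) for each T ∈ {A,B,C,D}, then A,B,C,D are coplanar. -/
theorem equal_gammas_implies_coplanar (A B C D E F Xs Ys : E3)
    (hdist : List.Pairwise (· ≠ ·) [A, B, C, D, E, F, Xs, Ys])
    (XP YP XQ YQ : E3)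
    (hP : IsSol A B C D E F Xs Ys XP YP) (hQ : IsSol A B C D E F Xs Ys XQ YQ)
    (hXPQ : XP ≠ XQ)
    (hgamma : ∀ T ∈ ({A, B, C, D} : Set E3), Gamma Xs Ys T YP = Gamma Xs Ys T YQ) :
    Coplanar ℝ ({A, B, C, D} : Set E3) :=
  equal_gammas_implies_coplanar_general A B C D E F Xs Ys XP YP XQ YQ hP hQ hXPQ hgamma
end
end

section
/- Let P₁,P₂,P₃,P₄ ∈ ℝ³ and r₁,r₂,r₃,r₄ ∈ ℝ. Suppose there exists z = (z₁,z₂,z₃) ∈ ℂ³ that is not real (i.e., at least one coordinate zⱼ has nonzero imaginary part) and satisfies the four complexified sphere equations Σⱼ₌₁³ (zⱼ − (Pᵢ)ⱼ)² = rᵢ² for i = 1,2,3,4. Then P₁,P₂,P₃,P₄ are coplanar. -/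
noncomputable section

/-- `z ∈ ℂ³` lies on the complexified sphere with center `P ∈ ℝ³` and radius `r ∈ ℝ`:
`Σⱼ (zⱼ − Pⱼ)² = r²` (sum of squares, no conjugation). -/
def OnComplexSphere (P : E3) (r : ℝ) (z : Fin 3 → ℂ) : Prop :=
  (z 0 - (P 0 : ℂ)) ^ 2 + (z 1 - (P 1 : ℂ)) ^ 2 + (z 2 - (P 2 : ℂ)) ^ 2 = (r : ℂ) ^ 2

/-!
Write `z = x + i y` with `x, y ∈ ℝ³`. The imaginary part of the sphere equation with center `P`
is `2 ⟪y, x - P⟫ = 0`, so every center lies on the plane through `x` orthogonal to `y`, and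
`y ≠ 0` because `z` is not real.
-/

open Module RealInnerProductSpace

theorem vectorSpan_le_orthogonal_span_singleton {𝕜 V : Type*} [RCLike 𝕜]
    [NormedAddCommGroup V] [InnerProductSpace 𝕜 V] {s : Set V} {v : V} {c : 𝕜}
    (h : ∀ p ∈ s, inner 𝕜 v p = c) : vectorSpan 𝕜 s ≤ (𝕜 ∙ v)ᗮ := by
  rw [vectorSpan_def, Submodule.span_le]
  rintro _ ⟨p, hp, q, hq, rfl⟩
  rw [SetLike.mem_coe, Submodule.mem_orthogonal_singleton_iff_inner_right]
  simp only [vsub_eq_sub, inner_sub_right, h p hp, h q hq, sub_self]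

theorem coplanar_of_forall_inner_eq {V : Type*} [NormedAddCommGroup V] [InnerProductSpace ℝ V]
    (hV : finrank ℝ V = 3) {s : Set V} {v : V} (hv : v ≠ 0) {c : ℝ}
    (h : ∀ p ∈ s, ⟪v, p⟫ = c) : Coplanar ℝ s := by
  have : Fact (finrank ℝ V = 2 + 1) := ⟨hV⟩
  have : FiniteDimensional ℝ V := .of_fact_finrank_eq_succ 2
  calc Module.rank ℝ (vectorSpan ℝ s)
      ≤ Module.rank ℝ (ℝ ∙ v)ᗮ := Submodule.rank_mono (vectorSpan_le_orthogonal_span_singleton h)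
    _ = 2 := by
      rw [← finrank_eq_rank, Submodule.finrank_orthogonal_span_singleton (n := 2) hv]
      rfl

def reVec (z : Fin 3 → ℂ) : E3 := WithLp.toLp 2 fun j => (z j).re

def imVec (z : Fin 3 → ℂ) : E3 := WithLp.toLp 2 fun j => (z j).im

theorem imVec_ne_zero {z : Fin 3 → ℂ} (hz : ∃ j, (z j).im ≠ 0) : imVec z ≠ 0 := by
  obtain ⟨j, hj⟩ := hz
  exact fun h => hj (congrArg (· j) h)

theorem OnComplexSphere.inner_imVec_eq {P : E3} {r : ℝ} {z : Fin 3 → ℂ}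
    (h : OnComplexSphere P r z) : ⟪imVec z, P⟫ = ⟪imVec z, reVec z⟫ := by
  have him := congrArg Complex.im h
  simp only [sq, Complex.add_im, Complex.mul_im, Complex.sub_re, Complex.sub_im,
    Complex.ofReal_re, Complex.ofReal_im, sub_zero] at him
  simp only [imVec, reVec, PiLp.inner_apply, Fin.sum_univ_three, RCLike.inner_apply,
    conj_trivial]
  linarith

/-- If four complexified spheres with real centers and radii share a common non-real
point of ℂ³, then their centers are coplanar. -/
theorem centers_coplanar_of_common_nonreal_point
    (P₁ P₂ P₃ P₄ : E3) (r₁ r₂ r₃ r₄ : ℝ)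
    (z : Fin 3 → ℂ) (hz : ∃ j : Fin 3, (z j).im ≠ 0)
    (h₁ : OnComplexSphere P₁ r₁ z) (h₂ : OnComplexSphere P₂ r₂ z)
    (h₃ : OnComplexSphere P₃ r₃ z) (h₄ : OnComplexSphere P₄ r₄ z) :
    Coplanar ℝ ({P₁, P₂, P₃, P₄} : Set E3) := by
  refine coplanar_of_forall_inner_eq finrank_euclideanSpace_fin (imVec_ne_zero hz)
    (c := ⟪imVec z, reVec z⟫) ?_
  rintro p (rfl | rfl | rfl | rfl)
  exacts [h₁.inner_imVec_eq, h₂.inner_imVec_eq, h₃.inner_imVec_eq, h₄.inner_imVec_eq]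
end
end

section
/- There exists a nonzero real polynomial Ω in sixteen variables with the following property: for all points P₁,P₂,P₃,P₄ ∈ ℝ³ that are not coplanar and all r₁,r₂,r₃,r₄ ∈ ℝ, the four complexified sphere equations Σⱼ₌₁³ (zⱼ − (Pᵢ)ⱼ)² = rᵢ² (i = 1,2,3,4) have a common solution z ∈ ℂ³ if and only if Ω(P₁,P₂,P₃,P₄,r₁²,r₂²,r₃²,r₄²) = 0, where Ω is evaluated at the twelve coordinates of P₁,…,P₄ and the four squared radii. -/
noncomputable section

namespace SphereAux

open Matrix MvPolynomial

def pIdx (i : Fin 4) (j : Fin 3) : Fin 16 := ⟨3 * i + j, by omega⟩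
def sIdx (i : Fin 4) : Fin 16 := ⟨12 + i, by omega⟩

/-- Polynomial matrix of the linear system obtained by subtracting sphere equations. -/
def Mp : Matrix (Fin 3) (Fin 3) (MvPolynomial (Fin 16) ℝ) :=
  fun i j => 2 * (X (pIdx i.succ j) - X (pIdx 0 j))

/-- Polynomial right-hand side of the linear system. -/
def bp : Fin 3 → MvPolynomial (Fin 16) ℝ := fun i =>
  X (sIdx 0) - X (sIdx i.succ)
    + (∑ j : Fin 3, X (pIdx i.succ j) ^ 2) - ∑ j : Fin 3, X (pIdx 0 j) ^ 2

/-- The detecting polynomial. -/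
def Om : MvPolynomial (Fin 16) ℝ :=
  (∑ j : Fin 3, ((Mp.adjugate *ᵥ bp) j - Mp.det * X (pIdx 0 j)) ^ 2)
    - Mp.det ^ 2 * X (sIdx 0)

lemma mulVec3 {R : Type*} [CommRing R] (A : Matrix (Fin 3) (Fin 3) R) (x : Fin 3 → R)
    (i : Fin 3) : (A *ᵥ x) i = A i 0 * x 0 + A i 1 * x 1 + A i 2 * x 2 := by
  simp [Matrix.mulVec, dotProduct, Fin.sum_univ_three]

lemma map_Om {A : Type*} [CommRing A] (f : MvPolynomial (Fin 16) ℝ →+* A) :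
    f Om = (∑ j : Fin 3,
        (((f.mapMatrix Mp).adjugate *ᵥ fun i => f (bp i)) j
          - (f.mapMatrix Mp).det * f (X (pIdx 0 j))) ^ 2)
      - (f.mapMatrix Mp).det ^ 2 * f (X (sIdx 0)) := by
  have hadj : ∀ j, f ((Mp.adjugate *ᵥ bp) j)
      = ((f.mapMatrix Mp).adjugate *ᵥ fun i => f (bp i)) j := by
    intro j
    rw [← RingHom.map_adjugate]
    simp [Matrix.mulVec, dotProduct, map_sum, RingHom.mapMatrix_apply,
      Matrix.map_apply]
  simp only [Om, map_sub, map_sum, _root_.map_mul, map_pow, hadj, RingHom.map_det]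

lemma core {M : Matrix (Fin 3) (Fin 3) ℂ} (hd : M.det ≠ 0) (b c : Fin 3 → ℂ) (s : ℂ) :
    (∃ z : Fin 3 → ℂ, (∑ j : Fin 3, (z j - c j) ^ 2) = s ∧ M *ᵥ z = b) ↔
      (∑ j : Fin 3, ((M.adjugate *ᵥ b) j - M.det * c j) ^ 2) = M.det ^ 2 * s := by
  constructor
  · rintro ⟨z, hz, rfl⟩
    have hw : M.adjugate *ᵥ M *ᵥ z = M.det • z := by
      rw [Matrix.mulVec_mulVec, Matrix.adjugate_mul, Matrix.smul_mulVec,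
        Matrix.one_mulVec]
    rw [hw, ← hz, Finset.mul_sum]
    refine Finset.sum_congr rfl fun j _ => ?_
    simp only [Pi.smul_apply, smul_eq_mul]
    ring
  · intro h
    refine ⟨M.det⁻¹ • (M.adjugate *ᵥ b), ?_, ?_⟩
    · have e1 : ∀ j : Fin 3, (M.det⁻¹ • (M.adjugate *ᵥ b)) j - c j
          = M.det⁻¹ * ((M.adjugate *ᵥ b) j - M.det * c j) := by
        intro j
        simp only [Pi.smul_apply, smul_eq_mul]
        field_simp
      calc (∑ j : Fin 3, ((M.det⁻¹ • (M.adjugate *ᵥ b)) j - c j) ^ 2)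
          = ∑ j : Fin 3, (M.det⁻¹) ^ 2 * ((M.adjugate *ᵥ b) j - M.det * c j) ^ 2 := by
            refine Finset.sum_congr rfl fun j _ => ?_
            rw [e1 j]; ring
        _ = (M.det⁻¹) ^ 2 * (M.det ^ 2 * s) := by rw [← Finset.mul_sum, h]
        _ = s := by field_simp
    · rw [Matrix.mulVec_smul, Matrix.mulVec_mulVec, Matrix.mul_adjugate,
        Matrix.smul_mulVec, Matrix.one_mulVec, smul_smul,
        inv_mul_cancel₀ hd, one_smul]

/-- The real matrix of the system. -/
def Mreal (P₁ P₂ P₃ P₄ : E3) : Matrix (Fin 3) (Fin 3) ℝ :=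
  !![2 * (P₂ 0 - P₁ 0), 2 * (P₂ 1 - P₁ 1), 2 * (P₂ 2 - P₁ 2);
     2 * (P₃ 0 - P₁ 0), 2 * (P₃ 1 - P₁ 1), 2 * (P₃ 2 - P₁ 2);
     2 * (P₄ 0 - P₁ 0), 2 * (P₄ 1 - P₁ 1), 2 * (P₄ 2 - P₁ 2)]

lemma det_Mreal_ne_zero {P₁ P₂ P₃ P₄ : E3}
    (h : ¬ Coplanar ℝ ({P₁, P₂, P₃, P₄} : Set E3)) :
    (Mreal P₁ P₂ P₃ P₄).det ≠ 0 := by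
  intro hdet
  obtain ⟨w, hw0, hMw⟩ := Matrix.exists_mulVec_eq_zero_iff.2 hdet
  -- the linear functional with "normal vector" w
  set f : E3 →ₗ[ℝ] ℝ :=
    { toFun := fun x => w 0 * x 0 + w 1 * x 1 + w 2 * x 2
      map_add' := by
        intro x y
        simp only [PiLp.add_apply]
        ring
      map_smul' := by
        intro c x
        simp only [PiLp.smul_apply, smul_eq_mul, RingHom.id_apply]
        ring } with hf
  have hfapp : ∀ x : E3, f x = w 0 * x 0 + w 1 * x 1 + w 2 * x 2 := fun _ => rfl
  have hMw0 := congrFun hMw 0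
  have hMw1 := congrFun hMw 1
  have hMw2 := congrFun hMw 2
  rw [mulVec3] at hMw0 hMw1 hMw2
  rw [show Mreal P₁ P₂ P₃ P₄ 0 0 = 2 * (P₂ 0 - P₁ 0) from rfl,
    show Mreal P₁ P₂ P₃ P₄ 0 1 = 2 * (P₂ 1 - P₁ 1) from rfl,
    show Mreal P₁ P₂ P₃ P₄ 0 2 = 2 * (P₂ 2 - P₁ 2) from rfl,
    show (0 : Fin 3 → ℝ) 0 = 0 from rfl] at hMw0
  rw [show Mreal P₁ P₂ P₃ P₄ 1 0 = 2 * (P₃ 0 - P₁ 0) from rfl,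
    show Mreal P₁ P₂ P₃ P₄ 1 1 = 2 * (P₃ 1 - P₁ 1) from rfl,
    show Mreal P₁ P₂ P₃ P₄ 1 2 = 2 * (P₃ 2 - P₁ 2) from rfl,
    show (0 : Fin 3 → ℝ) 1 = 0 from rfl] at hMw1
  rw [show Mreal P₁ P₂ P₃ P₄ 2 0 = 2 * (P₄ 0 - P₁ 0) from rfl,
    show Mreal P₁ P₂ P₃ P₄ 2 1 = 2 * (P₄ 1 - P₁ 1) from rfl,
    show Mreal P₁ P₂ P₃ P₄ 2 2 = 2 * (P₄ 2 - P₁ 2) from rfl,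
    show (0 : Fin 3 → ℝ) 2 = 0 from rfl] at hMw2
  have key : ∀ q ∈ ({P₁, P₂, P₃, P₄} : Set E3), f (q -ᵥ P₁) = 0 := by
    rintro q (rfl | rfl | rfl | rfl)
    · simp
    · rw [hfapp]
      simp only [vsub_eq_sub, PiLp.sub_apply]
      linear_combination hMw0 / 2
    · rw [hfapp]
      simp only [vsub_eq_sub, PiLp.sub_apply]
      linear_combination hMw1 / 2
    · rw [hfapp]
      simp only [vsub_eq_sub, PiLp.sub_apply]
      linear_combination hMw2 / 2
  have hle : vectorSpan ℝ ({P₁, P₂, P₃, P₄} : Set E3) ≤ LinearMap.ker f := by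
    rw [vectorSpan_def]
    refine Submodule.span_le.2 ?_
    rintro x ⟨a, ha, b, hb, rfl⟩
    have hab : a -ᵥ b = (a -ᵥ P₁) - (b -ᵥ P₁) := by
      simp [vsub_eq_sub]
    simp only [SetLike.mem_coe, LinearMap.mem_ker]
    show f (a -ᵥ b) = 0
    rw [hab, map_sub, key a ha, key b hb, sub_zero]
  -- the kernel of f is a proper subspace
  obtain ⟨j, hj⟩ := Function.ne_iff.1 hw0
  have hfx : f (EuclideanSpace.single j 1) = w j := by
    rw [hfapp]
    fin_cases j <;> simp [EuclideanSpace.single_apply]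
  have hker : Module.finrank ℝ (LinearMap.ker f) ≤ 2 := by
    by_contra hk
    push_neg at hk
    have hle3 : Module.finrank ℝ (LinearMap.ker f) ≤ 3 := by
      have := Submodule.finrank_le (LinearMap.ker f)
      simpa [finrank_euclideanSpace] using this
    have htop : LinearMap.ker f = ⊤ := by
      apply Submodule.eq_top_of_finrank_eq
      simp only [finrank_euclideanSpace, Fintype.card_fin]
      omega
    have : f (EuclideanSpace.single j 1) = 0 := by
      have : (EuclideanSpace.single j 1 : E3) ∈ LinearMap.ker f := by
        rw [htop]; trivial
      exact LinearMap.mem_ker.1 this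
    rw [hfx] at this
    exact hj this
  exact absurd (coplanar_iff_finrank_le_two.2
    (le_trans (Submodule.finrank_mono hle) hker)) h

lemma Om_ne_zero : Om ≠ 0 := by
  intro h
  set v₀ : Fin 16 → ℝ := ![0,0,0, 1,0,0, 0,1,0, 0,0,1, 0,0,0,0] with hv₀
  set g : MvPolynomial (Fin 16) ℝ →+* ℝ := (eval v₀ : MvPolynomial (Fin 16) ℝ →+* ℝ)
    with hg
  have hgX : ∀ k, g (X k) = v₀ k := by
    intro k
    rw [hg]
    exact eval_X k
  set N : Matrix (Fin 3) (Fin 3) ℝ := g.mapMatrix Mp with hN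
  have entry : ∀ (i : Fin 3) (j : Fin 3),
      N i j = 2 * (v₀ (pIdx i.succ j) - v₀ (pIdx 0 j)) := by
    intro i j
    rw [show N i j = g (2 * (X (pIdx i.succ j) - X (pIdx 0 j))) from rfl,
      _root_.map_mul, map_sub, hgX, hgX, map_ofNat]
  have n00 : N 0 0 = 2 := by rw [entry]; norm_num [show v₀ (pIdx 1 0) = 1 from rfl, show v₀ (pIdx 0 0) = 0 from rfl]
  have n01 : N 0 1 = 0 := by rw [entry]; norm_num [show v₀ (pIdx 1 1) = 0 from rfl, show v₀ (pIdx 0 1) = 0 from rfl]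
  have n02 : N 0 2 = 0 := by rw [entry]; norm_num [show v₀ (pIdx 1 2) = 0 from rfl, show v₀ (pIdx 0 2) = 0 from rfl]
  have n10 : N 1 0 = 0 := by rw [entry]; norm_num [show v₀ (pIdx 2 0) = 0 from rfl, show v₀ (pIdx 0 0) = 0 from rfl]
  have n11 : N 1 1 = 2 := by rw [entry]; norm_num [show v₀ (pIdx 2 1) = 1 from rfl, show v₀ (pIdx 0 1) = 0 from rfl]
  have n12 : N 1 2 = 0 := by rw [entry]; norm_num [show v₀ (pIdx 2 2) = 0 from rfl, show v₀ (pIdx 0 2) = 0 from rfl]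
  have n20 : N 2 0 = 0 := by rw [entry]; norm_num [show v₀ (pIdx (Fin.succ (2:Fin 3)) 0) = 0 from rfl, show v₀ (pIdx 0 0) = 0 from rfl]
  have n21 : N 2 1 = 0 := by rw [entry]; norm_num [show v₀ (pIdx (Fin.succ (2:Fin 3)) 1) = 0 from rfl, show v₀ (pIdx 0 1) = 0 from rfl]
  have n22 : N 2 2 = 2 := by rw [entry]; norm_num [show v₀ (pIdx (Fin.succ (2:Fin 3)) 2) = 1 from rfl, show v₀ (pIdx 0 2) = 0 from rfl]
  have hdet : N.det = 8 := by
    rw [Matrix.det_fin_three, n00, n01, n02, n10, n11, n12, n20, n21, n22]; norm_num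
  have hgb : ∀ i : Fin 3, g (bp i)
      = v₀ (sIdx 0) - v₀ (sIdx i.succ)
        + (v₀ (pIdx i.succ 0) ^ 2 + v₀ (pIdx i.succ 1) ^ 2 + v₀ (pIdx i.succ 2) ^ 2)
        - (v₀ (pIdx 0 0) ^ 2 + v₀ (pIdx 0 1) ^ 2 + v₀ (pIdx 0 2) ^ 2) := by
    intro i
    simp [bp, Fin.sum_univ_three, hgX]
  have hgb0 : g (bp 0) = 1 := by
    rw [hgb 0]
    norm_num [show v₀ (sIdx 0) = 0 from rfl, show v₀ (sIdx 1) = 0 from rfl,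
      show v₀ (pIdx 1 0) = 1 from rfl, show v₀ (pIdx 1 1) = 0 from rfl,
      show v₀ (pIdx 1 2) = 0 from rfl, show v₀ (pIdx 0 0) = 0 from rfl,
      show v₀ (pIdx 0 1) = 0 from rfl, show v₀ (pIdx 0 2) = 0 from rfl]
  have hgb1 : g (bp 1) = 1 := by
    rw [hgb 1]
    norm_num [show v₀ (sIdx 0) = 0 from rfl, show v₀ (sIdx 2) = 0 from rfl,
      show v₀ (pIdx 2 0) = 0 from rfl, show v₀ (pIdx 2 1) = 1 from rfl,
      show v₀ (pIdx 2 2) = 0 from rfl, show v₀ (pIdx 0 0) = 0 from rfl,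
      show v₀ (pIdx 0 1) = 0 from rfl, show v₀ (pIdx 0 2) = 0 from rfl]
  have hgb2 : g (bp 2) = 1 := by
    rw [hgb 2]
    norm_num [show v₀ (sIdx 0) = 0 from rfl, show v₀ (sIdx (Fin.succ (2:Fin 3))) = 0 from rfl,
      show v₀ (pIdx (Fin.succ (2:Fin 3)) 0) = 0 from rfl, show v₀ (pIdx (Fin.succ (2:Fin 3)) 1) = 0 from rfl,
      show v₀ (pIdx (Fin.succ (2:Fin 3)) 2) = 1 from rfl, show v₀ (pIdx 0 0) = 0 from rfl,
      show v₀ (pIdx 0 1) = 0 from rfl, show v₀ (pIdx 0 2) = 0 from rfl]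
  -- adjugate entries
  have a00 : N.adjugate 0 0 = N 1 1 * N 2 2 - N 1 2 * N 2 1 := by rw [Matrix.adjugate_fin_three]; rfl
  have a01 : N.adjugate 0 1 = -(N 0 1 * N 2 2) + N 0 2 * N 2 1 := by rw [Matrix.adjugate_fin_three]; rfl
  have a02 : N.adjugate 0 2 = N 0 1 * N 1 2 - N 0 2 * N 1 1 := by rw [Matrix.adjugate_fin_three]; rfl
  have a10 : N.adjugate 1 0 = -(N 1 0 * N 2 2) + N 1 2 * N 2 0 := by rw [Matrix.adjugate_fin_three]; rfl
  have a11 : N.adjugate 1 1 = N 0 0 * N 2 2 - N 0 2 * N 2 0 := by rw [Matrix.adjugate_fin_three]; rfl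
  have a12 : N.adjugate 1 2 = -(N 0 0 * N 1 2) + N 0 2 * N 1 0 := by rw [Matrix.adjugate_fin_three]; rfl
  have a20 : N.adjugate 2 0 = N 1 0 * N 2 1 - N 1 1 * N 2 0 := by rw [Matrix.adjugate_fin_three]; rfl
  have a21 : N.adjugate 2 1 = -(N 0 0 * N 2 1) + N 0 1 * N 2 0 := by rw [Matrix.adjugate_fin_three]; rfl
  have a22 : N.adjugate 2 2 = N 0 0 * N 1 1 - N 0 1 * N 1 0 := by rw [Matrix.adjugate_fin_three]; rfl
  have h48 : g Om = 48 := by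
    rw [map_Om, ← hN, Fin.sum_univ_three, mulVec3, mulVec3, mulVec3,
      a00, a01, a02, a10, a11, a12, a20, a21, a22,
      n00, n01, n02, n10, n11, n12, n20, n21, n22, hdet, hgb0, hgb1, hgb2,
      hgX, hgX, hgX, hgX,
      show v₀ (pIdx 0 0) = 0 from rfl, show v₀ (pIdx 0 1) = 0 from rfl,
      show v₀ (pIdx 0 2) = 0 from rfl, show v₀ (sIdx 0) = 0 from rfl]
    norm_num
  rw [h] at h48
  simp at h48

end SphereAux

open Matrix MvPolynomial SphereAux in
/-- There is a nonzero real polynomial Ω in sixteen variables such that for all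
non-coplanar P₁,P₂,P₃,P₄ ∈ ℝ³ and all radii r₁,…,r₄ ∈ ℝ, the four complexified sphere
equations have a common solution z ∈ ℂ³ if and only if Ω vanishes at the twelve
coordinates of the centers together with the four squared radii. -/
theorem exists_poly_detecting_common_point :
    ∃ Ω : MvPolynomial (Fin 16) ℝ, Ω ≠ 0 ∧
      ∀ P₁ P₂ P₃ P₄ : E3, ¬ Coplanar ℝ ({P₁, P₂, P₃, P₄} : Set E3) →
        ∀ r₁ r₂ r₃ r₄ : ℝ,
          ((∃ z : Fin 3 → ℂ,
              OnComplexSphere P₁ r₁ z ∧ OnComplexSphere P₂ r₂ z ∧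
              OnComplexSphere P₃ r₃ z ∧ OnComplexSphere P₄ r₄ z) ↔
            MvPolynomial.eval
              ![P₁ 0, P₁ 1, P₁ 2, P₂ 0, P₂ 1, P₂ 2, P₃ 0, P₃ 1, P₃ 2,
                P₄ 0, P₄ 1, P₄ 2, r₁ ^ 2, r₂ ^ 2, r₃ ^ 2, r₄ ^ 2] Ω = 0) := by
  classical
  refine ⟨SphereAux.Om, SphereAux.Om_ne_zero, ?_⟩
  intro P₁ P₂ P₃ P₄ hcop r₁ r₂ r₃ r₄
  set v : Fin 16 → ℝ :=
    ![P₁ 0, P₁ 1, P₁ 2, P₂ 0, P₂ 1, P₂ 2, P₃ 0, P₃ 1, P₃ 2,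
      P₄ 0, P₄ 1, P₄ 2, r₁ ^ 2, r₂ ^ 2, r₃ ^ 2, r₄ ^ 2] with hv
  set f : MvPolynomial (Fin 16) ℝ →+* ℂ :=
    Complex.ofRealHom.comp (eval v : MvPolynomial (Fin 16) ℝ →+* ℝ) with hfdef
  set M : Matrix (Fin 3) (Fin 3) ℂ := f.mapMatrix Mp with hMdef
  set b : Fin 3 → ℂ := fun i => f (bp i) with hbdef
  set c : Fin 3 → ℂ := ![(P₁ 0 : ℂ), (P₁ 1 : ℂ), (P₁ 2 : ℂ)] with hcdef
  have hfX : ∀ k, f (X k) = ((v k : ℝ) : ℂ) := by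
    intro k
    simp [hfdef]
  -- entries of M
  have hM00 : M 0 0 = 2 * ((P₂ 0 : ℂ) - (P₁ 0 : ℂ)) := by
    rw [show M 0 0 = f (2 * (X (pIdx (0:Fin 3).succ 0) - X (pIdx 0 0))) from rfl,
      _root_.map_mul, map_sub, hfX, hfX, map_ofNat,
      show v (pIdx (0:Fin 3).succ 0) = P₂ 0 from rfl, show v (pIdx 0 0) = P₁ 0 from rfl]
  have hM01 : M 0 1 = 2 * ((P₂ 1 : ℂ) - (P₁ 1 : ℂ)) := by
    rw [show M 0 1 = f (2 * (X (pIdx (0:Fin 3).succ 1) - X (pIdx 0 1))) from rfl,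
      _root_.map_mul, map_sub, hfX, hfX, map_ofNat,
      show v (pIdx (0:Fin 3).succ 1) = P₂ 1 from rfl, show v (pIdx 0 1) = P₁ 1 from rfl]
  have hM02 : M 0 2 = 2 * ((P₂ 2 : ℂ) - (P₁ 2 : ℂ)) := by
    rw [show M 0 2 = f (2 * (X (pIdx (0:Fin 3).succ 2) - X (pIdx 0 2))) from rfl,
      _root_.map_mul, map_sub, hfX, hfX, map_ofNat,
      show v (pIdx (0:Fin 3).succ 2) = P₂ 2 from rfl, show v (pIdx 0 2) = P₁ 2 from rfl]
  have hM10 : M 1 0 = 2 * ((P₃ 0 : ℂ) - (P₁ 0 : ℂ)) := by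
    rw [show M 1 0 = f (2 * (X (pIdx (1:Fin 3).succ 0) - X (pIdx 0 0))) from rfl,
      _root_.map_mul, map_sub, hfX, hfX, map_ofNat,
      show v (pIdx (1:Fin 3).succ 0) = P₃ 0 from rfl, show v (pIdx 0 0) = P₁ 0 from rfl]
  have hM11 : M 1 1 = 2 * ((P₃ 1 : ℂ) - (P₁ 1 : ℂ)) := by
    rw [show M 1 1 = f (2 * (X (pIdx (1:Fin 3).succ 1) - X (pIdx 0 1))) from rfl,
      _root_.map_mul, map_sub, hfX, hfX, map_ofNat,
      show v (pIdx (1:Fin 3).succ 1) = P₃ 1 from rfl, show v (pIdx 0 1) = P₁ 1 from rfl]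
  have hM12 : M 1 2 = 2 * ((P₃ 2 : ℂ) - (P₁ 2 : ℂ)) := by
    rw [show M 1 2 = f (2 * (X (pIdx (1:Fin 3).succ 2) - X (pIdx 0 2))) from rfl,
      _root_.map_mul, map_sub, hfX, hfX, map_ofNat,
      show v (pIdx (1:Fin 3).succ 2) = P₃ 2 from rfl, show v (pIdx 0 2) = P₁ 2 from rfl]
  have hM20 : M 2 0 = 2 * ((P₄ 0 : ℂ) - (P₁ 0 : ℂ)) := by
    rw [show M 2 0 = f (2 * (X (pIdx (2:Fin 3).succ 0) - X (pIdx 0 0))) from rfl,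
      _root_.map_mul, map_sub, hfX, hfX, map_ofNat,
      show v (pIdx (2:Fin 3).succ 0) = P₄ 0 from rfl, show v (pIdx 0 0) = P₁ 0 from rfl]
  have hM21 : M 2 1 = 2 * ((P₄ 1 : ℂ) - (P₁ 1 : ℂ)) := by
    rw [show M 2 1 = f (2 * (X (pIdx (2:Fin 3).succ 1) - X (pIdx 0 1))) from rfl,
      _root_.map_mul, map_sub, hfX, hfX, map_ofNat,
      show v (pIdx (2:Fin 3).succ 1) = P₄ 1 from rfl, show v (pIdx 0 1) = P₁ 1 from rfl]
  have hM22 : M 2 2 = 2 * ((P₄ 2 : ℂ) - (P₁ 2 : ℂ)) := by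
    rw [show M 2 2 = f (2 * (X (pIdx (2:Fin 3).succ 2) - X (pIdx 0 2))) from rfl,
      _root_.map_mul, map_sub, hfX, hfX, map_ofNat,
      show v (pIdx (2:Fin 3).succ 2) = P₄ 2 from rfl, show v (pIdx 0 2) = P₁ 2 from rfl]
  -- entries of b
  have hbp : ∀ i : Fin 3, b i
      = ((v (sIdx 0) : ℝ) : ℂ) - ((v (sIdx i.succ) : ℝ) : ℂ)
        + (((v (pIdx i.succ 0) : ℝ) : ℂ) ^ 2 + ((v (pIdx i.succ 1) : ℝ) : ℂ) ^ 2
          + ((v (pIdx i.succ 2) : ℝ) : ℂ) ^ 2)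
        - (((v (pIdx 0 0) : ℝ) : ℂ) ^ 2 + ((v (pIdx 0 1) : ℝ) : ℂ) ^ 2
          + ((v (pIdx 0 2) : ℝ) : ℂ) ^ 2) := by
    intro i
    show f (bp i) = _
    simp [bp, Fin.sum_univ_three, hfX]
  have hb0 : b 0 = ((r₁ : ℂ) ^ 2 - (r₂ : ℂ) ^ 2)
      + ((P₂ 0 : ℂ) ^ 2 + (P₂ 1 : ℂ) ^ 2 + (P₂ 2 : ℂ) ^ 2)
      - ((P₁ 0 : ℂ) ^ 2 + (P₁ 1 : ℂ) ^ 2 + (P₁ 2 : ℂ) ^ 2) := by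
    rw [hbp 0, show v (sIdx 0) = r₁ ^ 2 from rfl,
      show v (sIdx (0:Fin 3).succ) = r₂ ^ 2 from rfl,
      show v (pIdx (0:Fin 3).succ 0) = P₂ 0 from rfl,
      show v (pIdx (0:Fin 3).succ 1) = P₂ 1 from rfl,
      show v (pIdx (0:Fin 3).succ 2) = P₂ 2 from rfl,
      show v (pIdx 0 0) = P₁ 0 from rfl, show v (pIdx 0 1) = P₁ 1 from rfl,
      show v (pIdx 0 2) = P₁ 2 from rfl]
    push_cast
    ring
  have hb1 : b 1 = ((r₁ : ℂ) ^ 2 - (r₃ : ℂ) ^ 2)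
      + ((P₃ 0 : ℂ) ^ 2 + (P₃ 1 : ℂ) ^ 2 + (P₃ 2 : ℂ) ^ 2)
      - ((P₁ 0 : ℂ) ^ 2 + (P₁ 1 : ℂ) ^ 2 + (P₁ 2 : ℂ) ^ 2) := by
    rw [hbp 1, show v (sIdx 0) = r₁ ^ 2 from rfl,
      show v (sIdx (1:Fin 3).succ) = r₃ ^ 2 from rfl,
      show v (pIdx (1:Fin 3).succ 0) = P₃ 0 from rfl,
      show v (pIdx (1:Fin 3).succ 1) = P₃ 1 from rfl,
      show v (pIdx (1:Fin 3).succ 2) = P₃ 2 from rfl,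
      show v (pIdx 0 0) = P₁ 0 from rfl, show v (pIdx 0 1) = P₁ 1 from rfl,
      show v (pIdx 0 2) = P₁ 2 from rfl]
    push_cast
    ring
  have hb2 : b 2 = ((r₁ : ℂ) ^ 2 - (r₄ : ℂ) ^ 2)
      + ((P₄ 0 : ℂ) ^ 2 + (P₄ 1 : ℂ) ^ 2 + (P₄ 2 : ℂ) ^ 2)
      - ((P₁ 0 : ℂ) ^ 2 + (P₁ 1 : ℂ) ^ 2 + (P₁ 2 : ℂ) ^ 2) := by
    rw [hbp 2, show v (sIdx 0) = r₁ ^ 2 from rfl,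
      show v (sIdx (2:Fin 3).succ) = r₄ ^ 2 from rfl,
      show v (pIdx (2:Fin 3).succ 0) = P₄ 0 from rfl,
      show v (pIdx (2:Fin 3).succ 1) = P₄ 1 from rfl,
      show v (pIdx (2:Fin 3).succ 2) = P₄ 2 from rfl,
      show v (pIdx 0 0) = P₁ 0 from rfl, show v (pIdx 0 1) = P₁ 1 from rfl,
      show v (pIdx 0 2) = P₁ 2 from rfl]
    push_cast
    ring
  -- determinant is nonzero
  have hdR : (Mreal P₁ P₂ P₃ P₄).det ≠ 0 := det_Mreal_ne_zero hcop
  have hdet : M.det ≠ 0 := by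
    have hMc : M.det = (((Mreal P₁ P₂ P₃ P₄).det : ℝ) : ℂ) := by
      rw [Matrix.det_fin_three, Matrix.det_fin_three,
        hM00, hM01, hM02, hM10, hM11, hM12, hM20, hM21, hM22,
        show Mreal P₁ P₂ P₃ P₄ 0 0 = 2 * (P₂ 0 - P₁ 0) from rfl,
        show Mreal P₁ P₂ P₃ P₄ 0 1 = 2 * (P₂ 1 - P₁ 1) from rfl,
        show Mreal P₁ P₂ P₃ P₄ 0 2 = 2 * (P₂ 2 - P₁ 2) from rfl,
        show Mreal P₁ P₂ P₃ P₄ 1 0 = 2 * (P₃ 0 - P₁ 0) from rfl,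
        show Mreal P₁ P₂ P₃ P₄ 1 1 = 2 * (P₃ 1 - P₁ 1) from rfl,
        show Mreal P₁ P₂ P₃ P₄ 1 2 = 2 * (P₃ 2 - P₁ 2) from rfl,
        show Mreal P₁ P₂ P₃ P₄ 2 0 = 2 * (P₄ 0 - P₁ 0) from rfl,
        show Mreal P₁ P₂ P₃ P₄ 2 1 = 2 * (P₄ 1 - P₁ 1) from rfl,
        show Mreal P₁ P₂ P₃ P₄ 2 2 = 2 * (P₄ 2 - P₁ 2) from rfl]
      push_cast
      ring
    rw [hMc]
    exact_mod_cast hdR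
  have hc0 : c 0 = (P₁ 0 : ℂ) := rfl
  have hc1 : c 1 = (P₁ 1 : ℂ) := rfl
  have hc2 : c 2 = (P₁ 2 : ℂ) := rfl
  -- equivalence of the four sphere equations with (first sphere ∧ linear system)
  have h1 : ∀ z : Fin 3 → ℂ,
      (OnComplexSphere P₁ r₁ z ∧ OnComplexSphere P₂ r₂ z ∧
        OnComplexSphere P₃ r₃ z ∧ OnComplexSphere P₄ r₄ z)
      ↔ ((∑ j : Fin 3, (z j - c j) ^ 2) = (r₁ : ℂ) ^ 2 ∧ M *ᵥ z = b) := by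
    intro z
    constructor
    · rintro ⟨hA, hB, hC, hD⟩
      unfold OnComplexSphere at hA hB hC hD
      constructor
      · rw [Fin.sum_univ_three, hc0, hc1, hc2]
        exact hA
      · funext i
        fin_cases i
        · show (M *ᵥ z) 0 = b 0
          rw [mulVec3, hM00, hM01, hM02, hb0]
          linear_combination hA - hB
        · show (M *ᵥ z) 1 = b 1
          rw [mulVec3, hM10, hM11, hM12, hb1]
          linear_combination hA - hC
        · show (M *ᵥ z) 2 = b 2
          rw [mulVec3, hM20, hM21, hM22, hb2]
          linear_combination hA - hD
    · rintro ⟨hS, hMz⟩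
      rw [Fin.sum_univ_three, hc0, hc1, hc2] at hS
      have e0 := congrFun hMz 0
      have e1 := congrFun hMz 1
      have e2 := congrFun hMz 2
      rw [mulVec3, hM00, hM01, hM02, hb0] at e0
      rw [mulVec3, hM10, hM11, hM12, hb1] at e1
      rw [mulVec3, hM20, hM21, hM22, hb2] at e2
      refine ⟨?_, ?_, ?_, ?_⟩ <;> unfold OnComplexSphere
      · exact hS
      · linear_combination hS - e0
      · linear_combination hS - e1
      · linear_combination hS - e2
  -- evaluation of Om
  have hx : ∀ j : Fin 3, f (X (pIdx 0 j)) = c j := by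
    intro j
    rw [hfX]
    fin_cases j <;> rfl
  have hs : f (X (sIdx 0)) = (r₁ : ℂ) ^ 2 := by
    rw [hfX, show v (sIdx 0) = r₁ ^ 2 from rfl]
    push_cast
    ring
  have heval : ((MvPolynomial.eval v SphereAux.Om : ℝ) : ℂ)
      = (∑ j : Fin 3, ((M.adjugate *ᵥ b) j - M.det * c j) ^ 2)
        - M.det ^ 2 * (r₁ : ℂ) ^ 2 := by
    rw [show ((MvPolynomial.eval v SphereAux.Om : ℝ) : ℂ) = f SphereAux.Om from rfl,
      map_Om, ← hMdef, ← hbdef, hs]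
    simp only [hx]
  calc (∃ z : Fin 3 → ℂ,
        OnComplexSphere P₁ r₁ z ∧ OnComplexSphere P₂ r₂ z ∧
        OnComplexSphere P₃ r₃ z ∧ OnComplexSphere P₄ r₄ z)
      ↔ (∃ z : Fin 3 → ℂ, (∑ j : Fin 3, (z j - c j) ^ 2) = (r₁ : ℂ) ^ 2 ∧ M *ᵥ z = b) :=
        exists_congr h1
    _ ↔ ((∑ j : Fin 3, ((M.adjugate *ᵥ b) j - M.det * c j) ^ 2)
          = M.det ^ 2 * (r₁ : ℂ) ^ 2) := core hdet b c ((r₁ : ℂ) ^ 2)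
    _ ↔ MvPolynomial.eval v SphereAux.Om = 0 := by
        rw [← sub_eq_zero, ← heval]
        exact_mod_cast Iff.rfl
end
end

section
/- Let O ∈ ℝ³, let n ∈ ℝ³ be a unit vector, let ρ > 0, and let Σ = {P ∈ ℝ³ : ‖P−O‖ = ρ and (P−O)·n = 0} be the circle with center O and radius ρ in the plane through O orthogonal to n, with axis ℓ = {O + t·n : t ∈ ℝ}. Let A,B,C,D,E,F be six pairwise distinct points on Σ and let X*,Y* be two distinct points on ℓ. Then the set of solutions of System (*) is infinite. (In particular, condition (i) cannot be dropped from the finiteness theorem, since any four points of Σ are coplanar.) -/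
noncomputable section

lemma aux_le_one_div {u v : ℝ} (hv : 0 < v) (h : u * v ≤ 1) : u ≤ 1 / v := by
  rw [le_div_iff₀ hv]; linarith

lemma aux_lt_one_div {u v : ℝ} (hv : 0 < v) (h : u * v < 1) : u < 1 / v := by
  rw [lt_div_iff₀ hv]; linarith

lemma aux_one_div_lt {u v : ℝ} (hv : 0 < v) (h : 1 < u * v) : 1 / v < u := by
  rw [div_lt_iff₀ hv]; linarith

lemma dist_axis_sq (O n T : E3) (hn : ‖n‖ = 1) (ρ : ℝ)
    (hT : ‖T - O‖ = ρ ∧ inner ℝ (T - O) n = (0:ℝ)) (s : ℝ) :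
    ‖(O + s • n) - T‖ ^ 2 = s ^ 2 + ρ ^ 2 := by
  have h1 : (O + s • n) - T = s • n - (T - O) := by abel
  rw [h1, norm_sub_sq_real, real_inner_smul_left, real_inner_comm, hT.2, hT.1,
    norm_smul, hn]
  simp [sq_abs]

set_option maxHeartbeats 2000000 in
/-- For six pairwise distinct points on a circle and two distinct points X*, Y* on its
axis, System (*) has infinitely many solutions (hence condition (i) cannot be dropped
from the finiteness theorem). -/
theorem circle_configuration_infinitely_many_solutions
    (O n : E3) (hn : ‖n‖ = 1) (ρ : ℝ) (hρ : 0 < ρ)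
    (A B C D E F : E3)
    (hABCDEF : List.Pairwise (· ≠ ·) [A, B, C, D, E, F])
    (hA : ‖A - O‖ = ρ ∧ inner ℝ (A - O) n = (0 : ℝ))
    (hB : ‖B - O‖ = ρ ∧ inner ℝ (B - O) n = (0 : ℝ))
    (hC : ‖C - O‖ = ρ ∧ inner ℝ (C - O) n = (0 : ℝ))
    (hD : ‖D - O‖ = ρ ∧ inner ℝ (D - O) n = (0 : ℝ))
    (hE : ‖E - O‖ = ρ ∧ inner ℝ (E - O) n = (0 : ℝ))
    (hF : ‖F - O‖ = ρ ∧ inner ℝ (F - O) n = (0 : ℝ))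
    (Xs Ys : E3)
    (hXs : ∃ t : ℝ, Xs = O + t • n) (hYs : ∃ t : ℝ, Ys = O + t • n)
    (hXsYs : Xs ≠ Ys) :
    {p : E3 × E3 | IsSol A B C D E F Xs Ys p.1 p.2}.Infinite := by
  obtain ⟨a, rfl⟩ := hXs
  obtain ⟨b, rfl⟩ := hYs
  have hn0 : n ≠ 0 := by
    intro h; rw [h, norm_zero] at hn; norm_num at hn
  have hρ2 : (0:ℝ) < ρ ^ 2 := by positivity
  have hρ2' : (0:ℝ) < 1 / ρ ^ 2 := by positivity
  have hab : a ≠ b := by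
    intro h; exact hXsYs (by rw [h])
  set k : ℝ := 1/(a^2+ρ^2) + 1/(b^2+ρ^2) with hk
  clear_value k
  have ha2 : (0:ℝ) < a^2 + ρ^2 := by positivity
  have hb2 : (0:ℝ) < b^2 + ρ^2 := by positivity
  have hkpos : 0 < k := by rw [hk]; positivity
  have hcirc : ∀ T ∈ ({A,B,C,D,E,F} : Set E3),
      ‖T - O‖ = ρ ∧ inner ℝ (T - O) n = (0:ℝ) := by
    rintro T hT
    simp only [Set.mem_insert_iff, Set.mem_singleton_iff] at hT
    rcases hT with rfl|rfl|rfl|rfl|rfl|rfl <;> assumption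
  have hkT : ∀ T ∈ ({A,B,C,D,E,F} : Set E3), kc (O+a•n) (O+b•n) T = k := by
    intro T hT
    have h := hcirc T hT
    unfold kc
    rw [dist_axis_sq O n T hn ρ h a, dist_axis_sq O n T hn ρ h b]
    exact hk.symm
  have hklt : k < 2/ρ^2 := by
    have hab0 : a ≠ 0 ∨ b ≠ 0 := by
      by_contra h; push_neg at h; exact hab (h.1.trans h.2.symm)
    have h1 : 1/(a^2+ρ^2) ≤ 1/ρ^2 := by
      apply one_div_le_one_div_of_le hρ2; nlinarith [sq_nonneg a]
    have h2 : 1/(b^2+ρ^2) ≤ 1/ρ^2 := by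
      apply one_div_le_one_div_of_le hρ2; nlinarith [sq_nonneg b]
    have h3 : 2/ρ^2 = 1/ρ^2 + 1/ρ^2 := by ring
    rcases hab0 with h|h
    · have : 1/(a^2+ρ^2) < 1/ρ^2 := by
        apply one_div_lt_one_div_of_lt hρ2
        have := sq_pos_of_ne_zero h
        linarith
      rw [hk, h3]; linarith
    · have : 1/(b^2+ρ^2) < 1/ρ^2 := by
        apply one_div_lt_one_div_of_lt hρ2
        have := sq_pos_of_ne_zero h
        linarith
      rw [hk, h3]; linarith
  -- interval of valid x = s²
  obtain ⟨lo, hi, hlohi, hlo0, hvalid⟩ : ∃ lo hi : ℝ, lo < hi ∧ 0 ≤ lo ∧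
      ∀ x ∈ Set.Ioc lo hi, 1/(x+ρ^2) < k ∧ k - 1/(x+ρ^2) ≤ 1/ρ^2 := by
    have hki : k * (1/k) = 1 := by field_simp
    have hρi : ρ^2 * (1/ρ^2) = 1 := by field_simp
    by_cases hc : k ≤ 1/ρ^2
    · refine ⟨1/k - ρ^2, 1/k - ρ^2 + 1, by linarith, ?_, ?_⟩
      · have : ρ^2 ≤ 1/k := by
          apply aux_le_one_div hkpos
          nlinarith [hρi, mul_le_mul_of_nonneg_left hc (le_of_lt hρ2)]
        linarith
      · intro x hx
        obtain ⟨hx1, hx2⟩ := hx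
        have hxρ : 1/k < x + ρ^2 := by linarith
        have hx0 : 0 < x + ρ^2 := lt_trans (by positivity) hxρ
        constructor
        · apply aux_one_div_lt hx0
          nlinarith [hki, mul_lt_mul_of_pos_left hxρ hkpos]
        · have : 0 < 1/(x+ρ^2) := by positivity
          linarith
    · push_neg at hc
      have hkk : 0 < k - 1/ρ^2 := by linarith
      refine ⟨max (1/k - ρ^2) 0, 1/(k - 1/ρ^2) - ρ^2, ?_, le_max_right _ _, ?_⟩
      · apply max_lt
        · have : 1/k < 1/(k-1/ρ^2) := by
            apply one_div_lt_one_div_of_lt hkk; linarith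
          linarith
        · have : ρ^2 < 1/(k-1/ρ^2) := by
            apply aux_lt_one_div hkk
            have h2' : ρ^2 * (2/ρ^2) = 2 := by field_simp
            nlinarith [hρi, h2', mul_lt_mul_of_pos_left hklt hρ2]
          linarith
      · intro x hx
        obtain ⟨hx1, hx2⟩ := hx
        have hx1' : 1/k - ρ^2 < x := lt_of_le_of_lt (le_max_left _ _) hx1
        have hxρ : 1/k < x + ρ^2 := by linarith
        have hx0 : 0 < x + ρ^2 := lt_trans (by positivity) hxρ
        constructor
        · apply aux_one_div_lt hx0
          nlinarith [hki, mul_lt_mul_of_pos_left hxρ hkpos]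
        · have hle : x + ρ^2 ≤ 1/(k - 1/ρ^2) := by linarith
          have hkk' : (k - 1/ρ^2) * (1/(k - 1/ρ^2)) = 1 :=
            mul_one_div_cancel (ne_of_gt hkk)
          have : k - 1/ρ^2 ≤ 1/(x+ρ^2) := by
            apply aux_le_one_div hx0
            nlinarith [hkk', mul_le_mul_of_nonneg_left hle (le_of_lt hkk)]
          linarith
  set ψ : ℝ → E3 × E3 := fun x =>
    (O + Real.sqrt x • n, O + Real.sqrt (1/(k - 1/(x+ρ^2)) - ρ^2) • n) with hψ
  have hmem : ∀ x ∈ Set.Ioc lo hi,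
      ψ x ∈ {p : E3 × E3 | IsSol A B C D E F (O+a•n) (O+b•n) p.1 p.2} := by
    intro x hx
    obtain ⟨h1, h2⟩ := hvalid x hx
    have hx0 : 0 ≤ x := le_of_lt (lt_of_le_of_lt hlo0 hx.1)
    have hxρ : 0 < x + ρ^2 := by positivity
    have hkc : 0 < k - 1/(x+ρ^2) := by linarith
    have hkk' : (k - 1/(x+ρ^2)) * (1/(k - 1/(x+ρ^2))) = 1 :=
      mul_one_div_cancel (ne_of_gt hkc)
    have hu0 : 0 ≤ 1/(k - 1/(x+ρ^2)) - ρ^2 := by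
      have : ρ^2 ≤ 1/(k - 1/(x+ρ^2)) := by
        apply aux_le_one_div hkc
        have hρi : ρ^2 * (1/ρ^2) = 1 := by field_simp
        nlinarith [hρi, mul_le_mul_of_nonneg_left h2 (le_of_lt hρ2)]
      linarith
    simp only [Set.mem_setOf_eq, hψ]
    intro T hT
    have hTc := hcirc T hT
    have hX : ‖(O + Real.sqrt x • n) - T‖^2 = x + ρ^2 := by
      rw [dist_axis_sq O n T hn ρ hTc, Real.sq_sqrt hx0]
    have hY : ‖(O + Real.sqrt (1/(k - 1/(x+ρ^2)) - ρ^2) • n) - T‖^2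
        = 1/(k - 1/(x+ρ^2)) := by
      rw [dist_axis_sq O n T hn ρ hTc, Real.sq_sqrt hu0]; ring
    have hY0 : (0:ℝ) < 1/(k - 1/(x+ρ^2)) := by positivity
    refine ⟨?_, ?_, ?_⟩
    · intro h
      rw [h, sub_self, norm_zero] at hX
      simp only [ne_eq, OfNat.ofNat_ne_zero, not_false_eq_true, zero_pow] at hX
      linarith
    · intro h
      rw [h, sub_self, norm_zero] at hY
      simp only [ne_eq, OfNat.ofNat_ne_zero, not_false_eq_true, zero_pow] at hY
      linarith
    · rw [hX, hY, hkT T hT, one_div_one_div]; ring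
  have hinj : Set.InjOn ψ (Set.Ioc lo hi) := by
    intro x₁ hx₁ x₂ hx₂ h
    have hx₁0 : 0 ≤ x₁ := le_of_lt (lt_of_le_of_lt hlo0 hx₁.1)
    have hx₂0 : 0 ≤ x₂ := le_of_lt (lt_of_le_of_lt hlo0 hx₂.1)
    have h1 : O + Real.sqrt x₁ • n = O + Real.sqrt x₂ • n := congrArg Prod.fst h
    have h3 : (Real.sqrt x₁ - Real.sqrt x₂) • n = 0 := by
      rw [sub_smul]
      have := sub_eq_zero.mpr h1
      calc Real.sqrt x₁ • n - Real.sqrt x₂ • n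
          = (O + Real.sqrt x₁ • n) - (O + Real.sqrt x₂ • n) := by abel
        _ = 0 := this
    rcases smul_eq_zero.mp h3 with h4 | h4
    · have h5 : Real.sqrt x₁ = Real.sqrt x₂ := by linarith [sub_eq_zero.mp h4]
      calc x₁ = Real.sqrt x₁ ^ 2 := (Real.sq_sqrt hx₁0).symm
        _ = Real.sqrt x₂ ^ 2 := by rw [h5]
        _ = x₂ := Real.sq_sqrt hx₂0
    · exact absurd h4 hn0
  have hinf : (ψ '' Set.Ioc lo hi).Infinite :=
    Set.Infinite.image hinj (Set.Ioc_infinite hlohi)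
  refine Set.Infinite.mono ?_ hinf
  rintro p ⟨x, hx, rfl⟩
  exact hmem x hx
end
end

section
/- Let X₀, Y₀, X*, Y* ∈ ℝ³ with X* ≠ Y*. If for every point Q ∈ ℝ³ with Q ∉ {X₀, Y₀, X*, Y*} one has 1/‖X₀−Q‖² + 1/‖Y₀−Q‖² = 1/‖X*−Q‖² + 1/‖Y*−Q‖², then (X₀,Y₀) = (X*,Y*) or (X₀,Y₀) = (Y*,X*); that is, the function Q ↦ 1/‖X−Q‖² + 1/‖Y−Q‖² determines the unordered pair {X,Y}. -/
/-!
Near a point `A`, the term `1 / ‖A - Q‖ ^ 2` blows up while `1 / ‖C - Q‖ ^ 2` stays bounded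
whenever `C ≠ A`. So each singularity of one side of the identity must be a singularity of the
other side, i.e. `X₀` and `Y₀` lie in `{Xs, Ys}`, and conversely; as `Xs ≠ Ys`, the pairs agree.
-/

noncomputable section

open Filter Topology

section InverseSquare

variable {E : Type*} [NormedAddCommGroup E]

theorem tendsto_one_div_norm_sub_sq_nhdsNE (A : E) :
    Tendsto (fun Q => 1 / ‖A - Q‖ ^ 2) (𝓝[≠] A) atTop := by
  have := (tendsto_pow_atTop two_ne_zero).comp
    (tendsto_norm_sub_self_nhdsNE A).inv_tendsto_nhdsGT_zero
  refine this.congr fun Q => ?_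
  simp [norm_sub_rev]

theorem tendsto_one_div_norm_sub_sq_nhds {A C : E} (h : A ≠ C) :
    Tendsto (fun Q => 1 / ‖C - Q‖ ^ 2) (𝓝 A) (𝓝 (1 / ‖C - A‖ ^ 2)) := by
  have hCA : ‖C - A‖ ^ 2 ≠ 0 := by simpa [sub_eq_zero] using h.symm
  exact tendsto_const_nhds.div ((tendsto_const_nhds.sub tendsto_id).norm.pow 2) hCA

theorem eq_or_eq_of_forall_inv_sq_sum_eq [NormedSpace ℝ E] [Nontrivial E] {A B C D : E}
    (h : ∀ Q : E, Q ≠ A → Q ≠ B → Q ≠ C → Q ≠ D →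
      1 / ‖A - Q‖ ^ 2 + 1 / ‖B - Q‖ ^ 2 = 1 / ‖C - Q‖ ^ 2 + 1 / ‖D - Q‖ ^ 2) :
    A = C ∨ A = D := by
  by_contra! hAC_AD
  obtain ⟨hC, hD⟩ := hAC_AD
  have hsing : Tendsto (fun Q => 1 / ‖A - Q‖ ^ 2 + 1 / ‖B - Q‖ ^ 2) (𝓝[≠] A) atTop :=
    tendsto_atTop_mono (fun Q => le_add_of_nonneg_right (by positivity))
      (tendsto_one_div_norm_sub_sq_nhdsNE A)
  have hreg : Tendsto (fun Q => 1 / ‖C - Q‖ ^ 2 + 1 / ‖D - Q‖ ^ 2) (𝓝[≠] A)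
      (𝓝 (1 / ‖C - A‖ ^ 2 + 1 / ‖D - A‖ ^ 2)) :=
    ((tendsto_one_div_norm_sub_sq_nhds hC).add
      (tendsto_one_div_norm_sub_sq_nhds hD)).mono_left nhdsWithin_le_nhds
  have heq : (fun Q => 1 / ‖A - Q‖ ^ 2 + 1 / ‖B - Q‖ ^ 2)
      =ᶠ[𝓝[≠] A] fun Q => 1 / ‖C - Q‖ ^ 2 + 1 / ‖D - Q‖ ^ 2 := by
    have hcof := nhdsNE_le_cofinite A
    filter_upwards [self_mem_nhdsWithin, hcof (eventually_cofinite_ne B),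
      hcof (eventually_cofinite_ne C), hcof (eventually_cofinite_ne D)] with Q hQA hQB hQC hQD
    exact h Q hQA hQB hQC hQD
  exact not_tendsto_atTop_of_tendsto_nhds hreg (hsing.congr' heq)

end InverseSquare

/-- The function Q ↦ 1/‖X−Q‖² + 1/‖Y−Q‖² determines the unordered pair {X, Y}. -/
theorem unordered_pair_determined
    (X₀ Y₀ Xs Ys : E3) (hXY : Xs ≠ Ys)
    (h : ∀ Q : E3, Q ≠ X₀ → Q ≠ Y₀ → Q ≠ Xs → Q ≠ Ys →
      1 / ‖X₀ - Q‖ ^ 2 + 1 / ‖Y₀ - Q‖ ^ 2 = 1 / ‖Xs - Q‖ ^ 2 + 1 / ‖Ys - Q‖ ^ 2) :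
    (X₀ = Xs ∧ Y₀ = Ys) ∨ (X₀ = Ys ∧ Y₀ = Xs) := by
  have hX₀ : X₀ = Xs ∨ X₀ = Ys := eq_or_eq_of_forall_inv_sq_sum_eq h
  have hY₀ : Y₀ = Xs ∨ Y₀ = Ys := eq_or_eq_of_forall_inv_sq_sum_eq fun Q h₁ h₂ h₃ h₄ => by
    rw [add_comm]; exact h Q h₂ h₁ h₃ h₄
  have hXs : Xs = X₀ ∨ Xs = Y₀ := eq_or_eq_of_forall_inv_sq_sum_eq fun Q h₁ h₂ h₃ h₄ =>
    (h Q h₃ h₄ h₁ h₂).symm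
  have hYs : Ys = X₀ ∨ Ys = Y₀ := eq_or_eq_of_forall_inv_sq_sum_eq fun Q h₁ h₂ h₃ h₄ => by
    rw [add_comm]; exact (h Q h₃ h₄ h₂ h₁).symm
  rcases hX₀ with rfl | rfl <;> rcases hY₀ with rfl | rfl <;> simp_all [eq_comm]
end
end
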